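/- Suppose x : ℝ → ℝ⁶ satisfies ẋ = A(t)x with A(t) = [[-ω(t)^×, gI₃],[0, -ω(t)^×]], and let φ solve φ' = φω^× with φ(0) = I₃. Then x(t) = T(t)ᵀ exp(Ā(t-s)) T(s) x(s) for all s ≤ t, where T(t) = diag(φ(t),φ(t)) and Ā = [[0,gI₃],[0,0]]. In particular the state transition matrix of the system is Φ(t,s) = T(t)ᵀ exp(Ā(t-s)) T(s). -/

import Mathlib

open Matrix

def skew (u : Fin 3 → ℝ) : Matrix (Fin 3) (Fin 3) ℝ :=
  !![0, -u 2, u 1; u 2, 0, -u 0; -u 1, u 0, 0]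

/-- The system matrix `A(t) = [[-ω(t)^×, gI₃],[0, -ω(t)^×]]`. -/
def Amat (g : ℝ) (ω : ℝ → Fin 3 → ℝ) (t : ℝ) :
    Matrix (Fin 3 ⊕ Fin 3) (Fin 3 ⊕ Fin 3) ℝ :=
  Matrix.fromBlocks (-skew (ω t)) (g • (1 : Matrix (Fin 3) (Fin 3) ℝ))
    0 (-skew (ω t))

/-- `Ā = [[0, gI₃],[0,0]]`. -/
def Abar (g : ℝ) : Matrix (Fin 3 ⊕ Fin 3) (Fin 3 ⊕ Fin 3) ℝ :=
  Matrix.fromBlocks 0 (g • (1 : Matrix (Fin 3) (Fin 3) ℝ)) 0 0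

/-- `T(t) = diag(φ(t), φ(t))`. -/
def Tmat (φ : ℝ → Matrix (Fin 3) (Fin 3) ℝ) (t : ℝ) :
    Matrix (Fin 3 ⊕ Fin 3) (Fin 3 ⊕ Fin 3) ℝ :=
  Matrix.fromBlocks (φ t) 0 0 (φ t)

/-- The transition matrix `Φ(t,s) = T(t)ᵀ exp(Ā(t-s)) T(s)`. -/
noncomputable def Phi (g : ℝ) (φ : ℝ → Matrix (Fin 3) (Fin 3) ℝ) (t s : ℝ) :
    Matrix (Fin 3 ⊕ Fin 3) (Fin 3 ⊕ Fin 3) ℝ :=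
  (Tmat φ t)ᵀ * NormedSpace.exp ((t - s) • Abar g) * Tmat φ s

/-!
Substituting `y = T(t) x` removes the rotation: `T' = T · diag(ω^×, ω^×)` and `T` commutes with `Ā`,
so `y' = Ā y` and `y(t) = exp(Ā(t - s)) y(s)`. Since `ω^×` is skew, `φ φᵀ` has zero derivative,
so `φ` is orthogonal and `T(t)ᵀ` inverts `T(t)`. The same commutations give `∂ₜΦ = AΦ`.
-/

/- `HasDerivAt` for matrices only depends on their topology; the operator norm is opened to make
matrices a normed algebra, for the product rule and the derivative of `exp`. -/
open scoped Matrix.Norms.Operator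

section MatrixCalculus

variable {m n : Type*} [Fintype m] [Fintype n]

theorem hasDerivAt_matrix_iff [DecidableEq m] [DecidableEq n] {f : ℝ → Matrix m n ℝ}
    {f' : Matrix m n ℝ} {t : ℝ} :
    HasDerivAt f f' t ↔ ∀ i j, HasDerivAt (fun r => f r i j) (f' i j) t := by
  refine ⟨fun h i j => ?_, fun h => ?_⟩
  · exact (Matrix.entryLinearMap ℝ ℝ i j).toContinuousLinearMap.hasFDerivAt.comp_hasDerivAt t h
  · have expand (M : Matrix m n ℝ) : M = ∑ i, ∑ j, M i j • Matrix.single i j (1 : ℝ) := by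
      simpa only [Matrix.smul_single, smul_eq_mul, mul_one] using Matrix.matrix_eq_sum_single M
    rw [funext fun r => expand (f r), expand f']
    exact HasDerivAt.fun_sum fun i _ => HasDerivAt.fun_sum fun j _ => (h i j).smul_const _

theorem HasDerivAt.matrix_transpose [DecidableEq m] [DecidableEq n] {f : ℝ → Matrix m n ℝ}
    {f' : Matrix m n ℝ} {t : ℝ} (h : HasDerivAt f f' t) : HasDerivAt (fun r => (f r)ᵀ) f'ᵀ t :=
  hasDerivAt_matrix_iff.2 fun i j => hasDerivAt_matrix_iff.1 h j i

theorem HasDerivAt.matrix_fromBlocks {l o : Type*} [Fintype l] [Fintype o] [DecidableEq l]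
    [DecidableEq m] [DecidableEq n] [DecidableEq o] {A : ℝ → Matrix n l ℝ} {B : ℝ → Matrix n m ℝ}
    {C : ℝ → Matrix o l ℝ} {D : ℝ → Matrix o m ℝ} {A' : Matrix n l ℝ} {B' : Matrix n m ℝ}
    {C' : Matrix o l ℝ} {D' : Matrix o m ℝ} {t : ℝ} (hA : HasDerivAt A A' t)
    (hB : HasDerivAt B B' t) (hC : HasDerivAt C C' t) (hD : HasDerivAt D D' t) :
    HasDerivAt (fun r => Matrix.fromBlocks (A r) (B r) (C r) (D r))
      (Matrix.fromBlocks A' B' C' D') t :=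
  hasDerivAt_matrix_iff.2 <| by
    rintro (i | i) (j | j)
    exacts [hasDerivAt_matrix_iff.1 hA i j, hasDerivAt_matrix_iff.1 hB i j,
      hasDerivAt_matrix_iff.1 hC i j, hasDerivAt_matrix_iff.1 hD i j]

theorem HasDerivAt.matrix_mulVec {M : ℝ → Matrix m n ℝ} {M' : Matrix m n ℝ} {v : ℝ → n → ℝ}
    {v' : n → ℝ} {t : ℝ} (hM : HasDerivAt M M' t) (hv : HasDerivAt v v' t) :
    HasDerivAt (fun r => M r *ᵥ v r) (M t *ᵥ v' + M' *ᵥ v t) t :=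
  let B : Matrix m n ℝ →L[ℝ] (n → ℝ) →L[ℝ] m → ℝ :=
    LinearMap.mkContinuous₂ (Matrix.mulVecBilin ℝ ℝ) 1 fun M v => by
      simpa using Matrix.linfty_opNorm_mulVec M v
  B.hasDerivAt_of_bilinear (fun _ => hM) (fun _ => hv)

theorem transpose_mul_self_eq_one_of_hasDerivAt [DecidableEq n] {φ S : ℝ → Matrix n n ℝ}
    (hS : ∀ t, (S t)ᵀ = -S t) (hφ : ∀ t, HasDerivAt φ (φ t * S t) t) (hφ0 : φ 0 = 1)
    (t : ℝ) : (φ t)ᵀ * φ t = 1 := by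
  have hconst : ∀ r, HasDerivAt (fun r => φ r * (φ r)ᵀ) 0 r := fun r => by
    refine ((hφ r).mul (hφ r).matrix_transpose).congr_deriv ?_
    rw [Matrix.transpose_mul, hS, Matrix.neg_mul, Matrix.mul_neg, Matrix.mul_assoc, add_neg_cancel]
  have h := is_const_of_deriv_eq_zero (fun r => (hconst r).differentiableAt)
    (fun r => (hconst r).deriv) t 0
  simp only [hφ0, Matrix.transpose_one, mul_one] at h
  exact mul_eq_one_comm.1 h

theorem mulVec_eq_exp_mulVec_of_hasDerivAt [DecidableEq n] {N : Matrix n n ℝ}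
    {y : ℝ → n → ℝ} (hy : ∀ t, HasDerivAt y (N *ᵥ y t) t) (s t : ℝ) :
    y t = NormedSpace.exp ((t - s) • N) *ᵥ y s := by
  have hconst : ∀ r, HasDerivAt (fun r => NormedSpace.exp ((s - r) • N) *ᵥ y r) 0 r := by
    intro r
    have hexp :=
      (hasDerivAt_exp_smul_const N (s - r)).scomp r ((hasDerivAt_id r).const_sub s)
    refine (hexp.matrix_mulVec (hy r)).congr_deriv ?_
    simp [Matrix.mulVec_mulVec, Matrix.neg_mulVec]
  have h := is_const_of_deriv_eq_zero (fun r => (hconst r).differentiableAt)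
    (fun r => (hconst r).deriv) t s
  simp only [sub_self, zero_smul, NormedSpace.exp_zero, Matrix.one_mulVec] at h
  rw [← h, Matrix.mulVec_mulVec, ← Matrix.exp_add_of_commute, ← add_smul]
  · simp
  · exact ((Commute.refl N).smul_left _).smul_right _

end MatrixCalculus

theorem skew_transpose (u : Fin 3 → ℝ) : (skew u)ᵀ = -skew u := by
  ext i j; fin_cases i <;> fin_cases j <;> simp [skew]

theorem Abar_commute_fromBlocks (g : ℝ) (M : Matrix (Fin 3) (Fin 3) ℝ) :
    Commute (Abar g) (fromBlocks M 0 0 M) := by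
  simp [Commute, SemiconjBy, Abar, fromBlocks_multiply]

theorem Amat_eq_Abar_sub (g : ℝ) (ω : ℝ → Fin 3 → ℝ) (t : ℝ) :
    Amat g ω t = Abar g - fromBlocks (skew (ω t)) 0 0 (skew (ω t)) := by
  ext (i | i) (j | j) <;> simp [Amat, Abar]

theorem hasDerivAt_Tmat {φ : ℝ → Matrix (Fin 3) (Fin 3) ℝ} {S : Matrix (Fin 3) (Fin 3) ℝ}
    {t : ℝ} (hφ : HasDerivAt φ (φ t * S) t) :
    HasDerivAt (Tmat φ) (Tmat φ t * fromBlocks S 0 0 S) t := by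
  have h0 : HasDerivAt (fun _ => (0 : Matrix (Fin 3) (Fin 3) ℝ)) 0 t := hasDerivAt_const t 0
  refine (hφ.matrix_fromBlocks h0 h0 hφ).congr_deriv ?_
  simp [Tmat, fromBlocks_multiply]

theorem hasDerivAt_Tmat_transpose {ω : ℝ → Fin 3 → ℝ} {φ : ℝ → Matrix (Fin 3) (Fin 3) ℝ}
    {t : ℝ} (hφ : HasDerivAt φ (φ t * skew (ω t)) t) :
    HasDerivAt (fun r => (Tmat φ r)ᵀ)
      (-fromBlocks (skew (ω t)) 0 0 (skew (ω t)) * (Tmat φ t)ᵀ) t := by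
  refine (hasDerivAt_Tmat hφ).matrix_transpose.congr_deriv ?_
  rw [Matrix.transpose_mul, fromBlocks_transpose, skew_transpose, transpose_zero, fromBlocks_neg,
    neg_zero]

theorem Tmat_transpose_mul_self {φ : ℝ → Matrix (Fin 3) (Fin 3) ℝ} {t : ℝ}
    (h : (φ t)ᵀ * φ t = 1) : (Tmat φ t)ᵀ * Tmat φ t = 1 := by
  simp [Tmat, fromBlocks_transpose, fromBlocks_multiply, h]

theorem hasDerivAt_Phi (g : ℝ) {ω : ℝ → Fin 3 → ℝ} {φ : ℝ → Matrix (Fin 3) (Fin 3) ℝ}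
    {t : ℝ} (hφ : HasDerivAt φ (φ t * skew (ω t)) t) (s : ℝ) :
    HasDerivAt (fun r => Phi g φ r s) (Amat g ω t * Phi g φ t s) t := by
  set E := NormedSpace.exp ((t - s) • Abar g)
  have hE : HasDerivAt (fun r => NormedSpace.exp ((r - s) • Abar g)) (E * Abar g) t := by
    refine ((hasDerivAt_exp_smul_const (Abar g) (t - s)).scomp t
      ((hasDerivAt_id t).sub_const s)).congr_deriv ?_
    simp only [one_smul]
    -- the two sides differ only in the (defeq) topology on matrices behind `exp`
    rfl
  refine (((hasDerivAt_Tmat_transpose hφ).mul hE).mul_const (Tmat φ s)).congr_deriv ?_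
  have hAE : E * Abar g = Abar g * E := (((Commute.refl _).smul_right _).exp_right).eq.symm
  have hAT : (Tmat φ t)ᵀ * Abar g = Abar g * (Tmat φ t)ᵀ := by
    rw [Tmat, fromBlocks_transpose]
    simpa using (Abar_commute_fromBlocks g (φ t)ᵀ).eq.symm
  rw [Phi, Amat_eq_Abar_sub, hAE, ← mul_assoc, hAT]
  noncomm_ring

theorem Phi_self (g : ℝ) {φ : ℝ → Matrix (Fin 3) (Fin 3) ℝ} {s : ℝ}
    (h : (φ s)ᵀ * φ s = 1) : Phi g φ s s = 1 := by
  rw [Phi, sub_self, zero_smul, NormedSpace.exp_zero, mul_one, Tmat_transpose_mul_self h]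

theorem eq_Phi_mulVec_of_hasDerivAt (g : ℝ) {ω : ℝ → Fin 3 → ℝ} {φ : ℝ → Matrix (Fin 3) (Fin 3) ℝ}
    (hφ : ∀ t, HasDerivAt φ (φ t * skew (ω t)) t) (hφφ : ∀ t, (φ t)ᵀ * φ t = 1)
    {x : ℝ → (Fin 3 ⊕ Fin 3) → ℝ} (hx : ∀ t, HasDerivAt x (Amat g ω t *ᵥ x t) t) (s t : ℝ) :
    x t = Phi g φ t s *ᵥ x s := by
  have hy : ∀ r, HasDerivAt (fun r => Tmat φ r *ᵥ x r) (Abar g *ᵥ (Tmat φ r *ᵥ x r)) r :=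
    fun r => ((hasDerivAt_Tmat (hφ r)).matrix_mulVec (hx r)).congr_deriv <| by
      rw [mulVec_mulVec, mulVec_mulVec, ← add_mulVec, Amat_eq_Abar_sub, mul_sub,
        sub_add_cancel, Tmat, (Abar_commute_fromBlocks g (φ r)).eq]
  calc x t = ((Tmat φ t)ᵀ * Tmat φ t) *ᵥ x t := by
        rw [Tmat_transpose_mul_self (hφφ t), one_mulVec]
    _ = (Tmat φ t)ᵀ *ᵥ (Tmat φ t *ᵥ x t) := (mulVec_mulVec _ _ _).symm
    _ = Phi g φ t s *ᵥ x s := by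
      rw [mulVec_eq_exp_mulVec_of_hasDerivAt hy s t, Phi, mulVec_mulVec, mulVec_mulVec,
        mul_assoc]

theorem transition_matrix_formula_general (g : ℝ) (ω : ℝ → Fin 3 → ℝ)
    (φ : ℝ → Matrix (Fin 3) (Fin 3) ℝ)
    (hφ : ∀ t : ℝ, ∀ i j : Fin 3,
      HasDerivAt (fun s => φ s i j) ((φ t * skew (ω t)) i j) t)
    (hφ0 : φ 0 = 1)
    (x : ℝ → (Fin 3 ⊕ Fin 3) → ℝ)
    (hx : ∀ t : ℝ, ∀ i : Fin 3 ⊕ Fin 3,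
      HasDerivAt (fun s => x s i) ((Amat g ω t *ᵥ x t) i) t) :
    (∀ s t : ℝ, s ≤ t → x t = Phi g φ t s *ᵥ x s) ∧
    (∀ s t : ℝ, ∀ i j : Fin 3 ⊕ Fin 3,
      HasDerivAt (fun r => Phi g φ r s i j) ((Amat g ω t * Phi g φ t s) i j) t) ∧
    (∀ s : ℝ, Phi g φ s s = 1) := by
  have hφ' : ∀ t, HasDerivAt φ (φ t * skew (ω t)) t := fun t => hasDerivAt_matrix_iff.2 (hφ t)
  have hφφ : ∀ t, (φ t)ᵀ * φ t = 1 :=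
    transpose_mul_self_eq_one_of_hasDerivAt (fun t => skew_transpose (ω t)) hφ' hφ0
  have hx' : ∀ t, HasDerivAt x (Amat g ω t *ᵥ x t) t := fun t => hasDerivAt_pi.2 (hx t)
  refine ⟨fun s t _ => eq_Phi_mulVec_of_hasDerivAt g hφ' hφφ hx' s t,
    fun s t => hasDerivAt_matrix_iff.1 (hasDerivAt_Phi g (hφ' t) s), fun s => Phi_self g (hφφ s)⟩

/-- If `ẋ = A(t)x` and `φ' = φω^×`, `φ(0) = I₃`, then
`x(t) = T(t)ᵀ exp(Ā(t-s)) T(s) x(s)` for all `s ≤ t`; in particular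
`Φ(t,s) = T(t)ᵀ exp(Ā(t-s)) T(s)` is the state transition matrix:
`∂ₜΦ(t,s) = A(t)Φ(t,s)` and `Φ(s,s) = I₆`. -/
theorem transition_matrix_formula (g : ℝ) (ω : ℝ → Fin 3 → ℝ) (hω : Continuous ω)
    (φ : ℝ → Matrix (Fin 3) (Fin 3) ℝ)
    (hφ : ∀ t : ℝ, ∀ i j : Fin 3,
      HasDerivAt (fun s => φ s i j) ((φ t * skew (ω t)) i j) t)
    (hφ0 : φ 0 = 1)
    (x : ℝ → (Fin 3 ⊕ Fin 3) → ℝ)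
    (hx : ∀ t : ℝ, ∀ i : Fin 3 ⊕ Fin 3,
      HasDerivAt (fun s => x s i) ((Amat g ω t *ᵥ x t) i) t) :
    (∀ s t : ℝ, s ≤ t → x t = Phi g φ t s *ᵥ x s) ∧
    (∀ s t : ℝ, ∀ i j : Fin 3 ⊕ Fin 3,
      HasDerivAt (fun r => Phi g φ r s i j) ((Amat g ω t * Phi g φ t s) i j) t) ∧
    (∀ s : ℝ, Phi g φ s s = 1) :=
  transition_matrix_formula_general g ω φ hφ hφ0 x hx
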